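/- arXiv:1208.4519 — 4 statements merged into one kernel-verified Lean document; each statement's English description precedes it below -/
import Mathlib

section
/- Let R be a commutative ring, S an R-module, and e ∈ S an element such that the evaluation map Hom_R(S,S) → S given by f ↦ f(e) is an isomorphism of R-modules. Then there exists a unique R-bilinear multiplication μ : S × S → S such that μ(e,e) = e. -/
/-!
Write `E : End_R(S) ≃ S` for evaluation at `e`. Flipping a bilinear map `μ` gives a linear map
`S → End_R(S)`, and `μ e e = e` forces `μ e = id` (both send `e` to `e`), hence
`E (μ.flip y) = μ e y = y` for every `y`. So `μ e e = e` holds exactly when `μ.flip = E⁻¹`.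
-/

namespace LinearMap

variable {R S : Type*} [CommSemiring R] [AddCommMonoid S] [Module R S] {e : S}

theorem flip_eq_symm_ofBijective_applyₗ_iff
    (he : Function.Bijective (applyₗ e : (S →ₗ[R] S) →ₗ[R] S)) (μ : S →ₗ[R] S →ₗ[R] S) :
    μ.flip = (LinearEquiv.ofBijective _ he).symm.toLinearMap ↔ μ e e = e := by
  set E := LinearEquiv.ofBijective _ he
  constructor
  · intro hμ
    calc μ e e = E.symm e e := congr($hμ e e)
      _ = e := E.apply_symm_apply e
  · intro hμ
    have hμe : μ e = id := he.injective hμ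
    ext y : 1
    apply E.injective
    rw [LinearEquiv.coe_coe, E.apply_symm_apply]
    exact congr($hμe y)

theorem existsUnique_apply_self_eq_self
    (he : Function.Bijective (applyₗ e : (S →ₗ[R] S) →ₗ[R] S)) :
    ∃! μ : S →ₗ[R] S →ₗ[R] S, μ e e = e := by
  refine ⟨(LinearEquiv.ofBijective _ he).symm.toLinearMap.flip,
    (flip_eq_symm_ofBijective_applyₗ_iff he _).mp rfl, fun μ hμ => ?_⟩
  rw [← (flip_eq_symm_ofBijective_applyₗ_iff he μ).mpr hμ, flip_flip]

end LinearMap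

theorem stmt_0 {R : Type*} [CommRing R] {S : Type*} [AddCommGroup S] [Module R S] (e : S)
    (he : Function.Bijective fun f : S →ₗ[R] S => f e) :
    ∃! μ : S →ₗ[R] S →ₗ[R] S, μ e e = e :=
  LinearMap.existsUnique_apply_self_eq_self he
end

section
/- Let R be a commutative ring, S an R-module, and e ∈ S such that evaluation at e gives an isomorphism Hom_R(S,S) ≅ S. Then the unique R-bilinear multiplication μ on S with μ(e,e) = e is commutative: μ(x,y) = μ(y,x) for all x, y ∈ S. -/
/-!
An endomorphism of `S` is determined by its value at `e`. Hence both `μ e` and `μ.flip e` are the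
identity, since they send `e` to `μ e e = e`; then `μ.flip y` and `μ y` agree for every `y`, because
both send `e` to `y`.
-/

namespace LinearMap

variable {R S : Type*} [CommSemiring R] [AddCommMonoid S] [Module R S] {e : S}

theorem flip_eq_self_of_injective_eval (he : Function.Injective fun f : S →ₗ[R] S => f e)
    {μ : S →ₗ[R] S →ₗ[R] S} (hμ : μ e e = e) : μ.flip = μ := by
  have hleft : μ e = id := he hμ
  have hright : μ.flip e = id := he hμ
  ext y : 1
  apply he
  calc μ.flip y e = μ e y := rfl
    _ = y := by rw [hleft, id_apply]
    _ = μ.flip e y := by rw [hright, id_apply]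

end LinearMap

theorem stmt_1 {R : Type*} [CommRing R] {S : Type*} [AddCommGroup S] [Module R S] (e : S)
    (he : Function.Bijective fun f : S →ₗ[R] S => f e)
    (μ : S →ₗ[R] S →ₗ[R] S) (hμ : μ e e = e) :
    ∀ x y : S, μ x y = μ y x := fun x y =>
  LinearMap.congr_fun₂ (LinearMap.flip_eq_self_of_injective_eval he.injective hμ) y x
end

section
/- Let R be a commutative ring, S an R-module, and e ∈ S such that evaluation at e gives an isomorphism Hom_R(S,S) ≅ S. Then for every n ≥ 1, any R-multilinear map S^n → S is uniquely determined by its value on (e, e, ..., e); that is, the map sending an R-multilinear map m : S^n → S to m(e,...,e) is a bijection onto S. -/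
/-!
Induct on `n`, currying off the first variable: a multilinear map `S^(n+1) → S` is a linear map
`S → Hom(S^n, S)`, and by induction `Hom(S^n, S) ≃ S` via evaluation at `(e, …, e)`. Evaluation at
`e` on `Hom(S, X)` for any `X ≃ S` is conjugate to evaluation at `e` on `End S`, hence bijective.
-/

section

variable {R : Type*} [CommSemiring R] {S : Type*} [AddCommMonoid S] [Module R S]

theorem bijective_linearMap_eval_of_linearEquiv {e : S}
    (he : Function.Bijective fun f : S →ₗ[R] S => f e)
    {X : Type*} [AddCommMonoid X] [Module R X] (φ : S ≃ₗ[R] X) :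
    Function.Bijective fun f : S →ₗ[R] X => f e := by
  have hfactor : (fun f : S →ₗ[R] X => f e) =
      φ ∘ (fun g : S →ₗ[R] S => g e) ∘ (LinearEquiv.congrRight φ).symm := by
    funext f
    exact (φ.apply_symm_apply (f e)).symm
  rw [hfactor]
  exact φ.bijective.comp (he.comp (LinearEquiv.congrRight φ).symm.bijective)

theorem MultilinearMap.bijective_eval_of_isEmpty {ι : Type*} [IsEmpty ι] (v : ι → S) :
    Function.Bijective fun m : MultilinearMap R (fun _ : ι => S) S => m v := by
  have hsymm : (fun m : MultilinearMap R (fun _ : ι => S) S => m v) =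
      (constLinearEquivOfIsEmpty R R (fun _ : ι => S) S).symm := by
    funext m
    exact congr_arg m (Subsingleton.elim _ _)
  rw [hsymm]
  exact (constLinearEquivOfIsEmpty R R _ S).symm.bijective

theorem MultilinearMap.bijective_eval_const {e : S}
    (he : Function.Bijective fun f : S →ₗ[R] S => f e) (n : ℕ) :
    Function.Bijective fun m : MultilinearMap R (fun _ : Fin n => S) S => m fun _ => e := by
  induction n with
  | zero => exact bijective_eval_of_isEmpty _
  | succ n ih =>
    let evalEquiv : S ≃ₗ[R] MultilinearMap R (fun _ : Fin n => S) S :=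
      (LinearEquiv.ofBijective ⟨⟨fun m => m fun _ => e, fun _ _ => rfl⟩, fun _ _ => rfl⟩ ih).symm
    let curry := multilinearCurryLeftEquiv R (fun _ : Fin (n + 1) => S) S
    have hfactor : (fun m : MultilinearMap R (fun _ : Fin (n + 1) => S) S => m fun _ => e) =
        (fun m' : MultilinearMap R (fun _ : Fin n => S) S => m' fun _ => e) ∘
          (fun f : S →ₗ[R] MultilinearMap R (fun _ : Fin n => S) S => f e) ∘ curry := by
      funext m
      exact congr_arg m (Fin.cons_self_tail _).symm
    rw [hfactor]
    exact ih.comp ((bijective_linearMap_eval_of_linearEquiv he evalEquiv).comp curry.bijective)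

end

theorem stmt_3_general {R : Type*} [CommRing R] {S : Type*} [AddCommGroup S] [Module R S] (e : S)
    (he : Function.Bijective fun f : S →ₗ[R] S => f e)
    (n : ℕ) :
    Function.Bijective
      (fun m : MultilinearMap R (fun _ : Fin n => S) S => m fun _ => e) :=
  MultilinearMap.bijective_eval_const he n

theorem stmt_3 {R : Type*} [CommRing R] {S : Type*} [AddCommGroup S] [Module R S] (e : S)
    (he : Function.Bijective fun f : S →ₗ[R] S => f e)
    (n : ℕ) (hn : 1 ≤ n) :
    Function.Bijective
      (fun m : MultilinearMap R (fun _ : Fin n => S) S => m fun _ => e) :=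
  stmt_3_general e he n
end

section
/- Let R be a commutative ring and W ⊆ R a multiplicative subset. Set S = W⁻¹R (the localization), and let e = 1/1 ∈ S. Then the evaluation map Hom_R(S,S) → S, f ↦ f(e), is an isomorphism of R-modules. -/
section

variable {R : Type*} [CommSemiring R] (W : Submonoid R)
variable (A : Type*) [CommSemiring A] [Algebra R A] [IsLocalization W A]
variable (M : Type*) [AddCommMonoid M] [Module R M] [Module A M] [IsScalarTower R A M]

/-- Every `R`-linear map out of `W⁻¹R` into a `W⁻¹R`-module is `W⁻¹R`-linear, hence determined
by its value at `1`. -/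
def IsLocalization.linearMapEquivSelf : (A →ₗ[R] M) ≃ₗ[A] M :=
  (LinearMap.extendScalarsOfIsLocalizationEquiv W A).trans (LinearMap.ringLmapEquivSelf A A M)

end

theorem stmt_5 {R : Type*} [CommRing R] (W : Submonoid R) :
    Function.Bijective fun f : Localization W →ₗ[R] Localization W => f (1 : Localization W) :=
  (IsLocalization.linearMapEquivSelf W (Localization W) (Localization W)).bijective
end
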